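/- arXiv:1203.3312 — 2 statements merged into one kernel-verified Lean document; each statement's English description precedes it below -/
import Mathlib

section
/- For d = 2, the unique root β_2 ∈ (0,1) of -ln(1-β) = 3β/(3-2β) satisfies 0.883413 < β_2 < 0.883415, and c*_2 = -ln(1-β_2)/β_2^2 satisfies 2.75380 < c*_2 < 2.75382. -/
/-!
Write `rootGap d x = -ln(1-x) - (d+1)x/(d+1-dx)`, so that `β_d` is its root in `(0,1)`.
Its derivative has the sign of `x (d²x - (d²-1))`: starting from `rootGap d 0 = 0` it decreases
up to `(d²-1)/d²` and increases afterwards, so a root in `(0,1)` lies on the increasing branch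
and is bracketed by any two points there at which `rootGap` changes sign. For `d = 2` the signs
at `a = 0.883413` and `a = 0.883415` follow from `ln(1-a) = ln(8(1-a)) - 3 ln 2`, where
`8(1-a) ≈ 0.93` is close enough to `1` for five Taylor terms of `ln`, and `ln 2` to nine
digits. On the root `c*_2 = 3/(β(3-2β))`, which is monotone on the bracket.
-/

open Real Set

noncomputable def rootGap (d x : ℝ) : ℝ := -log (1 - x) - (d + 1) * x / (d + 1 - d * x)

lemma rootGap_zero (d : ℝ) : rootGap d 0 = 0 := by simp [rootGap]

lemma hasDerivAt_rootGap {d x : ℝ} (hd : 0 ≤ d) (hx : x < 1) :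
    HasDerivAt (rootGap d)
      (x * (d ^ 2 * x - (d ^ 2 - 1)) / ((1 - x) * (d + 1 - d * x) ^ 2)) x := by
  have h1 : 0 < 1 - x := by linarith
  have h2 : 0 < d + 1 - d * x := by nlinarith
  have hlog := (((hasDerivAt_id' x).const_sub 1).log h1.ne').neg
  have hfrac := ((hasDerivAt_id' x).const_mul (d + 1)).div
    (((hasDerivAt_id' x).const_mul d).const_sub (d + 1)) h2.ne'
  refine (hlog.sub hfrac).congr_deriv ?_
  -- otherwise `field_simp` rewrites `d * x` to `x * d` and no longer sees that `h2` applies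
  set D := d + 1 - d * x with hD
  field_simp
  rw [hD]
  ring

lemma rootGap_deriv_denom_pos {d x : ℝ} (hd : 0 ≤ d) (hx : x < 1) :
    0 < (1 - x) * (d + 1 - d * x) ^ 2 := by
  have : 0 < d + 1 - d * x := by nlinarith
  have : 0 < 1 - x := by linarith
  positivity

lemma continuousOn_rootGap {d : ℝ} (hd : 0 ≤ d) : ContinuousOn (rootGap d) (Iio 1) :=
  fun _ hx => (hasDerivAt_rootGap hd hx).continuousAt.continuousWithinAt

lemma strictAntiOn_rootGap {d : ℝ} (hd : 1 ≤ d) :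
    StrictAntiOn (rootGap d) (Icc 0 ((d ^ 2 - 1) / d ^ 2)) := by
  have hthr : (d ^ 2 - 1) / d ^ 2 < 1 := by
    rw [div_lt_one (by positivity)]; linarith
  refine strictAntiOn_of_deriv_neg (convex_Icc _ _)
    ((continuousOn_rootGap (by linarith)).mono fun x hx => lt_of_le_of_lt hx.2 hthr) ?_
  intro x hx
  rw [interior_Icc] at hx
  obtain ⟨hx0, hx⟩ := hx
  have hx1 : x < 1 := hx.trans hthr
  rw [(hasDerivAt_rootGap (by linarith) hx1).deriv]
  have hnum : d ^ 2 * x < d ^ 2 - 1 := by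
    rw [lt_div_iff₀ (by positivity)] at hx; linarith
  exact div_neg_of_neg_of_pos (mul_neg_of_pos_of_neg hx0 (by linarith))
    (rootGap_deriv_denom_pos (by linarith) hx1)

lemma strictMonoOn_rootGap {d : ℝ} (hd : 1 ≤ d) :
    StrictMonoOn (rootGap d) (Ico ((d ^ 2 - 1) / d ^ 2) 1) := by
  have hthr : 0 ≤ (d ^ 2 - 1) / d ^ 2 := div_nonneg (by nlinarith) (by positivity)
  refine strictMonoOn_of_deriv_pos (convex_Ico _ _)
    ((continuousOn_rootGap (by linarith)).mono fun x hx => hx.2) ?_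
  intro x hx
  rw [interior_Ico] at hx
  obtain ⟨hx, hx1⟩ := hx
  rw [(hasDerivAt_rootGap (by linarith) hx1).deriv]
  have hnum : d ^ 2 - 1 < d ^ 2 * x := by
    rw [div_lt_iff₀ (by positivity)] at hx; linarith
  exact div_pos (mul_pos (by linarith) (by linarith))
    (rootGap_deriv_denom_pos (by linarith) hx1)

lemma lt_of_rootGap_eq_zero {d β : ℝ} (hd : 1 ≤ d) (hβ : 0 < β) (hroot : rootGap d β = 0) :
    (d ^ 2 - 1) / d ^ 2 < β := by
  by_contra! h
  have := strictAntiOn_rootGap hd ⟨le_rfl, hβ.le.trans h⟩ ⟨hβ.le, h⟩ hβ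
  rw [rootGap_zero, hroot] at this
  exact this.false

lemma abs_log_one_sub_add_taylor_le {x : ℝ} (h0 : 0 ≤ x) (h1 : x < 1) :
    |log (1 - x) + (x + x ^ 2 / 2 + x ^ 3 / 3 + x ^ 4 / 4 + x ^ 5 / 5)| ≤ x ^ 6 / (1 - x) := by
  have h := abs_log_sub_add_sum_range_le (show |x| < 1 by rwa [abs_of_nonneg h0]) 5
  rw [abs_of_nonneg h0] at h
  convert h using 2
  simp only [Finset.sum_range_succ, Finset.sum_range_zero]
  norm_num
  ring

lemma log_one_sub_eq_log_eight_mul {a : ℝ} (ha : a < 1) :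
    log (1 - a) = log (1 - (8 * a - 7)) - 3 * log 2 := by
  rw [show 1 - (8 * a - 7) = 2 ^ 3 * (1 - a) by ring, log_mul (by norm_num) (by linarith),
    log_pow]
  push_cast
  ring

lemma rootGap_two_lt_zero : rootGap 2 0.883413 < 0 := by
  have htaylor := abs_le.mp
    (abs_log_one_sub_add_taylor_le (x := 8 * 0.883413 - 7) (by norm_num) (by norm_num))
  rw [rootGap, log_one_sub_eq_log_eight_mul (by norm_num)]
  norm_num at htaylor ⊢
  linarith [log_two_lt_d9]

lemma rootGap_two_pos : 0 < rootGap 2 0.883415 := by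
  have htaylor := abs_le.mp
    (abs_log_one_sub_add_taylor_le (x := 8 * 0.883415 - 7) (by norm_num) (by norm_num))
  rw [rootGap, log_one_sub_eq_log_eight_mul (by norm_num)]
  norm_num at htaylor ⊢
  linarith [log_two_gt_d9]

/-- For `d = 2`, the unique root `β_2 ∈ (0,1)` of `-ln(1-β) = 3β/(3-2β)` satisfies
`0.883413 < β_2 < 0.883415`, and `c*_2 = -ln(1-β_2)/β_2^2` satisfies
`2.75380 < c*_2 < 2.75382`. -/
theorem beta_cstar_two (β : ℝ) (hβ : β ∈ Set.Ioo (0 : ℝ) 1)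
    (hroot : -Real.log (1 - β) = 3 * β / (3 - 2 * β)) :
    0.883413 < β ∧ β < 0.883415 ∧
      2.75380 < -Real.log (1 - β) / β ^ 2 ∧ -Real.log (1 - β) / β ^ 2 < 2.75382 := by
  obtain ⟨hβ0, hβ1⟩ := hβ
  have hgap : rootGap 2 β = 0 := by
    rw [rootGap, hroot]; norm_num
  have hβ' : β ∈ Ico ((2 ^ 2 - 1) / 2 ^ 2) 1 :=
    ⟨(lt_of_rootGap_eq_zero one_le_two hβ0 hgap).le, hβ1⟩
  have hmono := strictMonoOn_rootGap (d := 2) one_le_two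
  have hlo : 0.883413 < β :=
    (hmono.lt_iff_lt ⟨by norm_num, by norm_num⟩ hβ').mp (hgap ▸ rootGap_two_lt_zero)
  have hhi : β < 0.883415 :=
    (hmono.lt_iff_lt hβ' ⟨by norm_num, by norm_num⟩).mp (hgap ▸ rootGap_two_pos)
  have hcstar : -log (1 - β) / β ^ 2 = 3 / (β * (3 - 2 * β)) := by
    rw [hroot]; field_simp
  have hpos : 0 < β * (3 - 2 * β) := by nlinarith
  refine ⟨hlo, hhi, ?_, ?_⟩
  · rw [hcstar, lt_div_iff₀ hpos]; nlinarith
  · rw [hcstar, div_lt_iff₀ hpos]; nlinarith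
end

section
/- Let d ≥ 2 be an integer, let β_d be the unique root in (0,1) of -ln(1-β) = (d+1)β/(d+1-dβ), and set c*_d = -ln(1-β_d)/β_d^d. Then β_d is the largest fixed point of g_{c*_d,d} in [0,1]: one has 1 - exp(-c*_d·β_d^d) = β_d, and every t ∈ (0,1] with 1 - exp(-c*_d·t^d) = t satisfies t ≤ β_d. -/
open Real Set

/-! For `t ∈ (0, 1)`, `t` is a fixed point of `g_{c,d}` iff `c = h t` with
`h t = -log (1 - t) / t ^ d`, and `1` is never a fixed point, so it suffices that `h` is strictly
increasing on `[β, 1)`. The sign of `h'` is that of `φ t = t / (1 - t) + d log (1 - t)`, and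
`φ' t = (1 - d (1 - t)) / (1 - t) ^ 2`. Finally `-log (1 - x)` and `(d + 1) x / (d + 1 - d x)`
agree at `0` and their difference decreases while `d² x ≤ d² - 1`, so the equation defining `β`
forces `d² β > d² - 1`; this gives both `d (1 - β) ≤ 1` and `φ β > 0`. -/

theorem strictMonoOn_of_hasDerivAt_pos {D : Set ℝ} (hD : Convex ℝ D) {f f' : ℝ → ℝ}
    (hf : ∀ x ∈ D, HasDerivAt f (f' x) x) (hf' : ∀ x ∈ interior D, 0 < f' x) :
    StrictMonoOn f D :=
  strictMonoOn_of_hasDerivWithinAt_pos hD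
    (fun x hx ↦ (hf x hx).continuousAt.continuousWithinAt)
    (fun x hx ↦ (hf x (interior_subset hx)).hasDerivWithinAt) hf'

theorem hasDerivAt_log_one_sub {x : ℝ} (hx : x < 1) :
    HasDerivAt (fun y ↦ log (1 - y)) (-(1 - x)⁻¹) x := by
  simpa [neg_div, div_eq_inv_mul] using
    ((hasDerivAt_id x).const_sub 1).log (by simp; linarith)

theorem neg_log_one_sub_lt_of_sq_mul_le {d x : ℝ} (hd : 0 ≤ d) (hx : 0 < x)
    (hdx : d ^ 2 * x ≤ d ^ 2 - 1) :
    -log (1 - x) < (d + 1) * x / (d + 1 - d * x) := by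
  have hx1 : x < 1 := by nlinarith
  set G : ℝ → ℝ := fun y ↦ (d + 1) * y / (d + 1 - d * y) + log (1 - y)
  have hden : ∀ y < 1, 0 < d + 1 - d * y := fun y hy ↦ by nlinarith
  have hG : ∀ y ∈ Icc 0 x,
      HasDerivAt G ((d + 1) ^ 2 / (d + 1 - d * y) ^ 2 - (1 - y)⁻¹) y := by
    intro y hy
    have hy1 : y < 1 := hy.2.trans_lt hx1
    have hq := ((hasDerivAt_id' y).const_mul (d + 1)).fun_div
      (((hasDerivAt_id' y).const_mul d).const_sub (d + 1)) (hden y hy1).ne'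
    refine (hq.fun_add (hasDerivAt_log_one_sub hy1)).congr_deriv ?_
    field_simp
    ring
  have hGmono : StrictMonoOn G (Icc 0 x) := by
    refine strictMonoOn_of_hasDerivAt_pos (convex_Icc 0 x) hG fun y hy ↦ ?_
    rw [interior_Icc] at hy
    obtain ⟨hy0, hyx⟩ := hy
    have hy1 : 0 < 1 - y := by linarith
    have hsq : (d + 1 - d * y) ^ 2 < (d + 1) ^ 2 * (1 - y) := by
      nlinarith [mul_pos hy0 (show 0 < d ^ 2 - 1 - d ^ 2 * y by nlinarith)]
    rw [sub_pos, inv_eq_one_div, div_lt_div_iff₀ hy1 (by nlinarith)]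
    linarith
  have := hGmono ⟨le_rfl, hx.le⟩ ⟨hx.le, le_rfl⟩ hx
  simp only [G, mul_zero, zero_div, sub_zero, log_one, add_zero] at this
  linarith

theorem sq_sub_one_lt_sq_mul_of_neg_log_one_sub_eq {d β : ℝ} (hd : 0 ≤ d) (hβ : 0 < β)
    (hroot : -log (1 - β) = (d + 1) * β / (d + 1 - d * β)) : d ^ 2 - 1 < d ^ 2 * β :=
  lt_of_not_ge fun h ↦ (neg_log_one_sub_lt_of_sq_mul_le hd hβ h).ne hroot

theorem div_one_sub_add_mul_log_one_sub_pos_of_neg_log_one_sub_eq {d β : ℝ} (hd : 0 ≤ d)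
    (hβ0 : 0 < β) (hβ1 : β < 1)
    (hroot : -log (1 - β) = (d + 1) * β / (d + 1 - d * β)) :
    0 < β / (1 - β) + d * log (1 - β) := by
  have hsq := sq_sub_one_lt_sq_mul_of_neg_log_one_sub_eq hd hβ0 hroot
  have hden : 0 < d + 1 - d * β := by nlinarith
  rw [show log (1 - β) = -((d + 1) * β / (d + 1 - d * β)) by linarith, mul_neg, ← sub_eq_add_neg,
    sub_pos, ← mul_div_assoc, div_lt_div_iff₀ hden (by linarith)]
  nlinarith [mul_pos hβ0 (show 0 < d ^ 2 * β - (d ^ 2 - 1) by linarith)]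

theorem div_one_sub_add_mul_log_one_sub_pos_of_le {d a : ℝ} (hd : 0 ≤ d) (ha : d * (1 - a) ≤ 1)
    (hφa : 0 < a / (1 - a) + d * log (1 - a)) :
    ∀ x ∈ Ico a 1, 0 < x / (1 - x) + d * log (1 - x) := by
  have hderiv : ∀ x ∈ Ico a 1, HasDerivAt (fun y ↦ y / (1 - y) + d * log (1 - y))
      ((1 - d * (1 - x)) / (1 - x) ^ 2) x := by
    intro x hx
    have hx1 : 1 - x ≠ 0 := by linarith [hx.2]
    refine (((hasDerivAt_id' x).fun_div ((hasDerivAt_id' x).const_sub 1) hx1).fun_add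
      ((hasDerivAt_log_one_sub hx.2).const_mul d)).congr_deriv ?_
    field_simp
    ring
  have hmono := strictMonoOn_of_hasDerivAt_pos (convex_Ico a 1) hderiv fun x hx ↦ by
    rw [interior_Ico] at hx
    have hx1 : 0 < 1 - x := by linarith [hx.2]
    have hdx : d * (1 - x) < 1 := by
      rcases hd.eq_or_lt with rfl | hd
      · simp
      · nlinarith [hx.1]
    exact div_pos (by linarith) (by positivity)
  intro x hx
  rcases hx.1.eq_or_lt with rfl | hax
  · exact hφa
  · exact hφa.trans (hmono ⟨le_rfl, hx.1.trans_lt hx.2⟩ hx hax)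

theorem strictMonoOn_neg_log_one_sub_div_pow {d : ℕ} {a : ℝ} (ha : 0 < a)
    (hφ : ∀ x ∈ Ico a 1, 0 < x / (1 - x) + d * log (1 - x)) :
    StrictMonoOn (fun x ↦ -log (1 - x) / x ^ d) (Ico a 1) := by
  have hderiv : ∀ x ∈ Ico a 1, HasDerivAt (fun x ↦ -log (1 - x) / x ^ d)
      (((1 - x)⁻¹ * x ^ d - -log (1 - x) * (d * x ^ (d - 1))) / (x ^ d) ^ 2) x := fun x hx ↦ by
    simpa using (hasDerivAt_log_one_sub hx.2).fun_neg.fun_div (hasDerivAt_pow d x)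
      (pow_pos (ha.trans_le hx.1) d).ne'
  refine strictMonoOn_of_hasDerivAt_pos (convex_Ico a 1) hderiv fun x hx ↦ ?_
  rw [interior_Ico] at hx
  have hx0 : 0 < x := ha.trans hx.1
  have hpow : (d : ℝ) * x ^ (d - 1) * x = d * x ^ d := by
    rcases d with _ | d
    · simp
    · simp [pow_succ, mul_assoc]
  have hnum : x * ((1 - x)⁻¹ * x ^ d - -log (1 - x) * (d * x ^ (d - 1))) =
      x ^ d * (x / (1 - x) + d * log (1 - x)) := by
    linear_combination log (1 - x) * hpow
  have hφx := mul_pos (pow_pos hx0 d) (hφ x (Ioo_subset_Ico_self hx))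
  exact div_pos (pos_of_mul_pos_right (hnum ▸ hφx) hx0.le) (by positivity)

theorem one_sub_exp_neg_mul_pow_eq_self_iff {c t : ℝ} {d : ℕ} (ht0 : 0 < t) (ht1 : t < 1) :
    1 - exp (-c * t ^ d) = t ↔ c = -log (1 - t) / t ^ d := by
  rw [eq_div_iff (pow_pos ht0 d).ne', sub_eq_iff_eq_add', ← sub_eq_iff_eq_add,
    eq_comm, exp_injective.eq_iff' (exp_log (by linarith))]
  constructor <;> intro h <;> linarith

theorem beta_is_largest_fixed_point_general (d : ℕ) (β : ℝ)
    (hβ : β ∈ Set.Ioo (0 : ℝ) 1)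
    (hroot : -Real.log (1 - β) = ((d : ℝ) + 1) * β / ((d : ℝ) + 1 - d * β))
    (cstar : ℝ) (hcstar : cstar = -Real.log (1 - β) / β ^ d) :
    1 - Real.exp (-cstar * β ^ d) = β ∧
      ∀ t ∈ Set.Ioc (0 : ℝ) 1, 1 - Real.exp (-cstar * t ^ d) = t → t ≤ β := by
  obtain ⟨hβ0, hβ1⟩ := hβ
  have hd : (0 : ℝ) ≤ d := d.cast_nonneg
  have hdβ : (d : ℝ) * (1 - β) ≤ 1 := by
    have : (d : ℝ) ≤ d ^ 2 := by exact_mod_cast Nat.le_self_pow two_ne_zero d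
    nlinarith [sq_sub_one_lt_sq_mul_of_neg_log_one_sub_eq hd hβ0 hroot]
  have hφβ := div_one_sub_add_mul_log_one_sub_pos_of_neg_log_one_sub_eq hd hβ0 hβ1 hroot
  have hmono := strictMonoOn_neg_log_one_sub_div_pow hβ0
    (div_one_sub_add_mul_log_one_sub_pos_of_le hd hdβ hφβ)
  refine ⟨(one_sub_exp_neg_mul_pow_eq_self_iff hβ0 hβ1).2 hcstar, fun t ⟨ht0, ht1⟩ hfix ↦ ?_⟩
  have ht1 : t < 1 := ht1.lt_of_ne fun h ↦ by
    subst h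
    linarith [exp_pos (-cstar * 1 ^ d)]
  by_contra! hβt
  exact (hmono ⟨le_rfl, hβ1⟩ ⟨hβt.le, ht1⟩ hβt).ne
    (hcstar.symm.trans ((one_sub_exp_neg_mul_pow_eq_self_iff ht0 ht1).1 hfix))

/-- Let `d ≥ 2`, let `β` be the unique root in `(0,1)` of `-ln(1-β) = (d+1)β/(d+1-dβ)`,
and set `c* = -ln(1-β)/β^d`. Then `β` is the largest fixed point of `g_{c*,d}` in
`[0,1]`: `1 - exp(-c* β^d) = β`, and every `t ∈ (0,1]` with `1 - exp(-c* t^d) = t`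
satisfies `t ≤ β`. -/
theorem beta_is_largest_fixed_point (d : ℕ) (hd : 2 ≤ d) (β : ℝ)
    (hβ : β ∈ Set.Ioo (0 : ℝ) 1)
    (hroot : -Real.log (1 - β) = ((d : ℝ) + 1) * β / ((d : ℝ) + 1 - d * β))
    (cstar : ℝ) (hcstar : cstar = -Real.log (1 - β) / β ^ d) :
    1 - Real.exp (-cstar * β ^ d) = β ∧
      ∀ t ∈ Set.Ioc (0 : ℝ) 1, 1 - Real.exp (-cstar * t ^ d) = t → t ≤ β :=
  beta_is_largest_fixed_point_general d β hβ hroot cstar hcstar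
end
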